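/- arXiv:2105.00563 — 6 statements merged into one kernel-verified Lean document; each statement's English description precedes it below -/
import Mathlib

section
/- Quad Lemma: Let A, B, C, D : ℝ → ℂ × ℂ be functions that are continuous on a neighborhood of 0, and let σ : ℝ → ℂ be a function with σ(s) ≠ 0 for all s ≠ 0 in some neighborhood of 0. Assume A(0) ≠ C(0), and assume there exist constants M > 0 and δ > 0 such that for all s with 0 < |s| < δ one has |area(A(s), C(s), B(s))| ≤ M·|σ(s)| and |area(A(s), C(s), D(s))| ≤ M·|σ(s)|. Then there exist constants M' > 0 and δ' > 0 such that for all s with 0 < |s| < δ' one has |area(A(s), B(s), D(s))| ≤ M'·|σ(s)| and |area(C(s), B(s), D(s))| ≤ M'·|σ(s)|. -/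
/-!
Write `[u, v] = cross u v` for the determinant of two vectors. Up to a factor, the areas of `ACB`
and `ACD` are `[w, B - A]` and `[w, D - A]` with `w = C - A`. Fix a vector `e` with
`[w(0), e] ≠ 0`; the Plücker relation `[u, v] [w, e] = [w, v] [u, e] - [w, u] [v, e]` expresses
`[B - A, D - A]`, twice the area of `ABD`, as `O(σ)` times quantities that stay bounded near `0`,
because `[w, e]` stays away from `0`. The triangle `CBD` is handled in the same way with the roles
of `A` and `C` exchanged.
-/

/-- The signed area of the ordered triangle `(p, q, r)` in the complex plane `ℂ × ℂ`. -/
noncomputable def triArea (p q r : ℂ × ℂ) : ℂ :=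
  ((q.1 - p.1) * (r.2 - p.2) - (r.1 - p.1) * (q.2 - p.2)) / 2

open Filter Topology Asymptotics

section Cross

variable {𝕜 : Type*} [NormedField 𝕜]

def cross (u v : 𝕜 × 𝕜) : 𝕜 := u.1 * v.2 - u.2 * v.1

lemma continuous_cross_right (e : 𝕜 × 𝕜) : Continuous fun u : 𝕜 × 𝕜 => cross u e := by
  unfold cross; fun_prop

lemma cross_mul_cross (u v w e : 𝕜 × 𝕜) :
    cross u v * cross w e = cross w v * cross u e - cross w u * cross v e := by
  simp only [cross]; ring

lemma exists_cross_ne_zero {w : 𝕜 × 𝕜} (hw : w ≠ 0) : ∃ e : 𝕜 × 𝕜, cross w e ≠ 0 := by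
  by_cases h₁ : w.1 = 0
  · refine ⟨(1, 0), ?_⟩
    have h₂ : w.2 ≠ 0 := fun h₂ => hw (Prod.ext h₁ h₂)
    simpa [cross] using h₂
  · exact ⟨(0, 1), by simpa [cross] using h₁⟩

lemma isBigO_cross {α : Type*} {l : Filter α} {u v w : α → 𝕜 × 𝕜} {u₀ v₀ w₀ : 𝕜 × 𝕜}
    {g : α → 𝕜} (hu : Tendsto u l (𝓝 u₀)) (hv : Tendsto v l (𝓝 v₀))
    (hw : Tendsto w l (𝓝 w₀)) (hw₀ : w₀ ≠ 0)
    (hwu : (fun x => cross (w x) (u x)) =O[l] g) (hwv : (fun x => cross (w x) (v x)) =O[l] g) :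
    (fun x => cross (u x) (v x)) =O[l] g := by
  obtain ⟨e, he⟩ := exists_cross_ne_zero hw₀
  have tendsto_cross {a : α → 𝕜 × 𝕜} {a₀ : 𝕜 × 𝕜} (ha : Tendsto a l (𝓝 a₀)) :
      Tendsto (fun x => cross (a x) e) l (𝓝 (cross a₀ e)) :=
    ((continuous_cross_right e).tendsto a₀).comp ha
  have ratio_isBigO_one {a : α → 𝕜 × 𝕜} {a₀ : 𝕜 × 𝕜} (ha : Tendsto a l (𝓝 a₀)) :
      (fun x => cross (a x) e / cross (w x) e) =O[l] (fun _ => (1 : 𝕜)) :=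
    ((tendsto_cross ha).div (tendsto_cross hw) he).isBigO_one 𝕜
  have plucker : ∀ᶠ x in l, cross (w x) (v x) * (cross (u x) e / cross (w x) e) -
      cross (w x) (u x) * (cross (v x) e / cross (w x) e) = cross (u x) (v x) := by
    filter_upwards [(tendsto_cross hw).eventually_ne he] with x hx
    field_simp
    linear_combination (cross_mul_cross (u x) (v x) (w x) e).symm
  simpa using ((hwv.mul (ratio_isBigO_one hu)).sub (hwu.mul (ratio_isBigO_one hv))).congr'
    plucker EventuallyEq.rfl

end Cross

lemma two_mul_triArea (p q r : ℂ × ℂ) : 2 * triArea p q r = cross (q - p) (r - p) := by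
  simp only [triArea, cross, Prod.fst_sub, Prod.snd_sub]; ring

lemma triArea_swap (p q r : ℂ × ℂ) : triArea q p r = -triArea p q r := by
  simp only [triArea]; ring

lemma isBigO_triArea {α : Type*} {l : Filter α} {p q b d : α → ℂ × ℂ} {p₀ q₀ b₀ d₀ : ℂ × ℂ}
    {g : α → ℂ} (hp : Tendsto p l (𝓝 p₀)) (hq : Tendsto q l (𝓝 q₀))
    (hb : Tendsto b l (𝓝 b₀)) (hd : Tendsto d l (𝓝 d₀)) (hpq : p₀ ≠ q₀)
    (hpqb : (fun x => triArea (p x) (q x) (b x)) =O[l] g)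
    (hpqd : (fun x => triArea (p x) (q x) (d x)) =O[l] g) :
    (fun x => triArea (p x) (b x) (d x)) =O[l] g := by
  rw [← isBigO_const_mul_left_iff (two_ne_zero' ℂ)] at hpqb hpqd ⊢
  simp only [two_mul_triArea] at hpqb hpqd ⊢
  exact isBigO_cross (hb.sub hp) (hd.sub hp) (hq.sub hp) (sub_ne_zero.2 hpq.symm) hpqb hpqd

section Punctured

variable {E F : Type*} [Norm E] [SeminormedAddCommGroup F] {f : ℝ → E} {g : ℝ → F}

lemma eventually_nhdsNE_zero_iff {P : ℝ → Prop} :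
    (∀ᶠ s in 𝓝[≠] 0, P s) ↔ ∃ δ > 0, ∀ s : ℝ, 0 < |s| → |s| < δ → P s := by
  simp only [eventually_nhdsWithin_iff, Metric.eventually_nhds_iff, Real.dist_0_eq_abs,
    Set.mem_compl_singleton_iff, abs_pos]
  exact exists_congr fun δ => and_congr_right fun _ => forall_congr' fun s => by tauto

lemma isBigO_nhdsNE_zero_of_bound {M δ : ℝ} (hδ : 0 < δ)
    (h : ∀ s : ℝ, 0 < |s| → |s| < δ → ‖f s‖ ≤ M * ‖g s‖) : f =O[𝓝[≠] 0] g :=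
  IsBigO.of_bound M (eventually_nhdsNE_zero_iff.2 ⟨δ, hδ, h⟩)

lemma Asymptotics.IsBigO.exists_bound_nhdsNE_zero (h : f =O[𝓝[≠] 0] g) :
    ∃ M δ : ℝ, 0 < M ∧ 0 < δ ∧ ∀ s : ℝ, 0 < |s| → |s| < δ → ‖f s‖ ≤ M * ‖g s‖ := by
  obtain ⟨M, hM, hMfg⟩ := h.exists_pos
  obtain ⟨δ, hδ, hδfg⟩ := eventually_nhdsNE_zero_iff.1 hMfg.bound
  exact ⟨M, δ, hM, hδ, hδfg⟩

end Punctured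

theorem quad_lemma_general (A B C D : ℝ → ℂ × ℂ) (σ : ℝ → ℂ)
    (U : Set ℝ) (hU : U ∈ nhds (0 : ℝ))
    (hA : ContinuousOn A U) (hB : ContinuousOn B U)
    (hC : ContinuousOn C U) (hD : ContinuousOn D U)
    (hAC : A 0 ≠ C 0)
    (M : ℝ) (δ : ℝ) (hδ : 0 < δ)
    (hACB : ∀ s : ℝ, 0 < |s| → |s| < δ →
      ‖triArea (A s) (C s) (B s)‖ ≤ M * ‖σ s‖)
    (hACD : ∀ s : ℝ, 0 < |s| → |s| < δ →
      ‖triArea (A s) (C s) (D s)‖ ≤ M * ‖σ s‖) :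
    ∃ M' δ' : ℝ, 0 < M' ∧ 0 < δ' ∧ ∀ s : ℝ, 0 < |s| → |s| < δ' →
      ‖triArea (A s) (B s) (D s)‖ ≤ M' * ‖σ s‖ ∧
      ‖triArea (C s) (B s) (D s)‖ ≤ M' * ‖σ s‖ := by
  have tendsto {F : ℝ → ℂ × ℂ} (hF : ContinuousOn F U) : Tendsto F (𝓝[≠] 0) (𝓝 (F 0)) :=
    ((hF.continuousAt hU).tendsto).mono_left nhdsWithin_le_nhds
  have hACB' := isBigO_nhdsNE_zero_of_bound hδ hACB
  have hACD' := isBigO_nhdsNE_zero_of_bound hδ hACD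
  have hABD := isBigO_triArea (tendsto hA) (tendsto hC) (tendsto hB) (tendsto hD) hAC hACB' hACD'
  have hCBD := isBigO_triArea (tendsto hC) (tendsto hA) (tendsto hB) (tendsto hD) hAC.symm
    (hACB'.neg_left.congr_left fun _ => (triArea_swap _ _ _).symm)
    (hACD'.neg_left.congr_left fun _ => (triArea_swap _ _ _).symm)
  obtain ⟨M', δ', hM', hδ', hbound⟩ := (hABD.prod_left hCBD).exists_bound_nhdsNE_zero
  exact ⟨M', δ', hM', hδ', fun s hs hsδ' =>
    ⟨(norm_fst_le _).trans (hbound s hs hsδ'), (norm_snd_le _).trans (hbound s hs hsδ')⟩⟩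

/-- **Quad Lemma.** If `A, B, C, D` are continuous near `0`, `σ` is nonvanishing on a deleted
neighborhood of `0`, `A 0 ≠ C 0`, and the areas of `ACB` and `ACD` are bounded by a constant
multiple of `|σ|` on a deleted neighborhood of `0`, then so are the areas of `ABD` and `CBD`. -/
theorem quad_lemma (A B C D : ℝ → ℂ × ℂ) (σ : ℝ → ℂ)
    (U : Set ℝ) (hU : U ∈ nhds (0 : ℝ))
    (hA : ContinuousOn A U) (hB : ContinuousOn B U)
    (hC : ContinuousOn C U) (hD : ContinuousOn D U)
    (δ₀ : ℝ) (hδ₀ : 0 < δ₀)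
    (hσ : ∀ s : ℝ, 0 < |s| → |s| < δ₀ → σ s ≠ 0)
    (hAC : A 0 ≠ C 0)
    (M : ℝ) (hM : 0 < M) (δ : ℝ) (hδ : 0 < δ)
    (hACB : ∀ s : ℝ, 0 < |s| → |s| < δ →
      ‖triArea (A s) (C s) (B s)‖ ≤ M * ‖σ s‖)
    (hACD : ∀ s : ℝ, 0 < |s| → |s| < δ →
      ‖triArea (A s) (C s) (D s)‖ ≤ M * ‖σ s‖) :
    ∃ M' δ' : ℝ, 0 < M' ∧ 0 < δ' ∧ ∀ s : ℝ, 0 < |s| → |s| < δ' →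
      ‖triArea (A s) (B s) (D s)‖ ≤ M' * ‖σ s‖ ∧
      ‖triArea (C s) (B s) (D s)‖ ≤ M' * ‖σ s‖ :=
  quad_lemma_general A B C D σ U hU hA hB hC hD hAC M δ hδ hACB hACD
end

section
/- Nugget on wheels: Let n ≥ 3 and let S₀, …, S_{n−1}, R : ℝ → ℂ × ℂ be continuous functions (indices taken modulo n). Suppose there are points P ≠ Q in ℂ × ℂ with Sᵢ(0) = P for all i and R(0) = Q. Define the polygon area area(⬠(s)) := Σ_{i<n} area(O, Sᵢ(s), S_{i+1 mod n}(s)), where O = (0,0). Suppose there is δ > 0 such that Σ_{i<n} |area(Sᵢ(s), S_{i+1 mod n}(s), R(s))| ≠ 0 for all s with 0 < |s| < δ. Then the quotient |area(⬠(s))| / Σ_{i<n} |area(Sᵢ(s), S_{i+1 mod n}(s), R(s))| tends to 0 as s tends to 0 with s ≠ 0. -/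
open Finset Filter Topology

lemma sum_sub_add_right_eq_zero {M : Type*} [AddCommGroup M] {n : ℕ} [NeZero n]
    (g : Fin n → M) (k : Fin n) : ∑ i, (g (i + k) - g i) = 0 := by
  rw [sum_sub_distrib, sub_eq_zero]
  exact Equiv.sum_comp (Equiv.addRight k) g

section Det2

variable {K : Type*} [CommRing K]

def det2 (u v : K × K) : K := u.1 * v.2 - u.2 * v.1

lemma det2_swap (u v : K × K) : det2 u v = -det2 v u := by
  unfold det2; ring

lemma det2_mul_det2_eq (w e x y : K × K) :
    det2 x y * det2 w e = det2 x e * det2 w y - det2 y e * det2 w x := by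
  unfold det2; ring

lemma exists_det2_ne_zero {v : K × K} (hv : v ≠ 0) : ∃ e, det2 v e ≠ 0 := by
  by_cases h₁ : v.1 = 0
  · have h₂ : v.2 ≠ 0 := fun h₂ => hv (Prod.ext h₁ h₂)
    exact ⟨(1, 0), by simpa [det2] using h₂⟩
  · exact ⟨(0, 1), by simpa [det2] using h₁⟩

lemma continuous_det2_left [TopologicalSpace K] [IsTopologicalRing K] (e : K × K) :
    Continuous fun u : K × K => det2 u e := by
  unfold det2; fun_prop

end Det2

lemma sum_det2_div_det2_mul_det2_eq_zero {K : Type*} [Field K] {n : ℕ} [NeZero n] (k : Fin n)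
    (x : Fin n → K × K) {e : K × K} (he : e ≠ 0) (hx : ∀ i, det2 (x i) e ≠ 0) :
    ∑ i, det2 (x i) (x (i + k)) / (det2 (x i) e * det2 (x (i + k)) e) = 0 := by
  obtain ⟨w, hw⟩ := exists_det2_ne_zero he
  have hwe : det2 w e ≠ 0 := by rw [det2_swap]; exact neg_ne_zero.mpr hw
  set g : Fin n → K := fun i => det2 w (x i) / (det2 w e * det2 (x i) e)
  have hg : ∀ i j, det2 (x i) (x j) / (det2 (x i) e * det2 (x j) e) = g j - g i := by
    intro i j
    have hi := hx i
    have hj := hx j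
    rw [div_sub_div _ _ (mul_ne_zero hwe hj) (mul_ne_zero hwe hi),
      div_eq_div_iff (mul_ne_zero hi hj) (by positivity)]
    linear_combination
      (det2 w e * det2 (x i) e * det2 (x j) e) * det2_mul_det2_eq w e (x i) (x j)
  simp_rw [hg]
  exact sum_sub_add_right_eq_zero g k

section Ratio

variable {𝕜 ι : Type*} [NormedField 𝕜]

lemma norm_sum_le_of_sum_div_eq_zero (s : Finset ι) (T μ : ι → 𝕜)
    (h : ∑ i ∈ s, T i / μ i = 0) {ε : ℝ} (hε : ∀ i ∈ s, ‖1 - (μ i)⁻¹‖ ≤ ε) :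
    ‖∑ i ∈ s, T i‖ ≤ ε * ∑ i ∈ s, ‖T i‖ :=
  calc ‖∑ i ∈ s, T i‖ = ‖∑ i ∈ s, (1 - (μ i)⁻¹) * T i‖ := by
        simp_rw [sub_mul, one_mul, sum_sub_distrib, inv_mul_eq_div, h, sub_zero]
    _ ≤ ∑ i ∈ s, ‖(1 - (μ i)⁻¹) * T i‖ := norm_sum_le _ _
    _ ≤ ∑ i ∈ s, ε * ‖T i‖ := sum_le_sum fun i hi => by
        rw [norm_mul]; exact mul_le_mul_of_nonneg_right (hε i hi) (norm_nonneg _)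
    _ = ε * ∑ i ∈ s, ‖T i‖ := (mul_sum _ _ _).symm

lemma tendsto_norm_sum_div_sum_norm_of_sum_div_eq_zero [Fintype ι] {α : Type*} {l : Filter α}
    (T μ : ι → α → 𝕜) (hμ : ∀ i, Tendsto (μ i) l (𝓝 1))
    (h : ∀ᶠ a in l, ∑ i, T i a / μ i a = 0) :
    Tendsto (fun a => ‖∑ i, T i a‖ / ∑ i, ‖T i a‖) l (𝓝 0) := by
  set ε : α → ℝ := fun a => ∑ i, ‖1 - (μ i a)⁻¹‖
  have hε : Tendsto ε l (𝓝 0) := by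
    have := tendsto_finsetSum univ fun i _ =>
      (tendsto_const_nhds (x := (1 : 𝕜)).sub ((hμ i).inv₀ one_ne_zero)).norm
    simpa using this
  refine tendsto_of_tendsto_of_tendsto_of_le_of_le' tendsto_const_nhds hε
    (Eventually.of_forall fun a => by positivity) ?_
  filter_upwards [h] with a ha
  refine div_le_of_le_mul₀ (by positivity) (by positivity) ?_
  exact norm_sum_le_of_sum_div_eq_zero _ _ _ ha fun i hi =>
    single_le_sum (f := fun i => ‖1 - (μ i a)⁻¹‖) (fun _ _ => norm_nonneg _) hi

variable {n : ℕ} [NeZero n]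

lemma exists_tendsto_one_sum_det2_div_eq_zero {α : Type*} {l : Filter α} (k : Fin n)
    (x : Fin n → α → 𝕜 × 𝕜) {v : 𝕜 × 𝕜} (hv : v ≠ 0) (hx : ∀ i, Tendsto (x i) l (𝓝 v)) :
    ∃ μ : Fin n → α → 𝕜, (∀ i, Tendsto (μ i) l (𝓝 1)) ∧
      ∀ᶠ a in l, ∑ i, det2 (x i a) (x (i + k) a) / μ i a = 0 := by
  obtain ⟨e, he⟩ := exists_det2_ne_zero hv
  have hxe : ∀ i, Tendsto (fun a => det2 (x i a) e) l (𝓝 (det2 v e)) := fun i =>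
    ((continuous_det2_left e).tendsto v).comp (hx i)
  refine ⟨fun i a => det2 (x i a) e * det2 (x (i + k) a) e / det2 v e ^ 2, fun i => ?_, ?_⟩
  · have := ((hxe i).mul (hxe (i + k))).div_const (det2 v e ^ 2)
    rwa [← sq, div_self (pow_ne_zero 2 he)] at this
  · have hne : ∀ᶠ a in l, ∀ i, det2 (x i a) e ≠ 0 :=
      eventually_all.mpr fun i => (hxe i).eventually_ne he
    filter_upwards [hne] with a ha
    have he0 : e ≠ 0 := by rintro rfl; simp [det2] at he
    simp_rw [div_div_eq_mul_div, mul_div_right_comm _ (det2 v e ^ 2), ← sum_mul]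
    rw [sum_det2_div_det2_mul_det2_eq_zero k (fun i => x i a) he0 ha, zero_mul]

end Ratio

lemma triArea_eq_det2 (p q r : ℂ × ℂ) : triArea p q r = det2 (p - r) (q - r) / 2 := by
  simp only [triArea, det2, Prod.fst_sub, Prod.snd_sub]; ring

lemma sum_triArea_base_eq_sum_triArea_hub {n : ℕ} [NeZero n] (S : Fin n → ℂ × ℂ) (k : Fin n)
    (o r : ℂ × ℂ) : ∑ i, triArea o (S i) (S (i + k)) = ∑ i, triArea (S i) (S (i + k)) r := by
  set g : Fin n → ℂ := fun i => (det2 r (S i) - det2 o (S i)) / 2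
  have h : ∀ i, triArea o (S i) (S (i + k)) = triArea (S i) (S (i + k)) r + (g (i + k) - g i) :=
    fun i => by simp only [g, triArea, det2]; ring
  rw [sum_congr rfl fun i _ => h i, sum_add_distrib, sum_sub_add_right_eq_zero, add_zero]

/-- **Nugget on wheels.** If the vertices `S i` of a wheel with hub `R` all tend to a common
point `P` as `s → 0` while the hub tends to a different point `Q`, then the area of the polygon
formed by the `S i` becomes small relative to the sum of the absolute values of the areas of the
spoke triangles `(S i, S (i+1), R)`. -/
theorem nugget_on_wheels (n : ℕ) (hn : 3 ≤ n)
    (S : Fin n → ℝ → ℂ × ℂ) (R : ℝ → ℂ × ℂ)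
    (hS : ∀ i, Continuous (S i)) (hR : Continuous R)
    (P Q : ℂ × ℂ) (hPQ : P ≠ Q)
    (hS0 : ∀ i, S i 0 = P) (hR0 : R 0 = Q) :
    Filter.Tendsto
      (fun s : ℝ =>
        ‖∑ i : Fin n, triArea ((0, 0) : ℂ × ℂ) (S i s) (S (i + ⟨1, by omega⟩) s)‖ /
          ∑ i : Fin n, ‖triArea (S i s) (S (i + ⟨1, by omega⟩) s) (R s)‖)
      (nhdsWithin 0 {(0 : ℝ)}ᶜ) (nhds 0) := by
  have : NeZero n := ⟨by omega⟩
  have hx : ∀ i, Tendsto (fun s => S i s - R s) (𝓝[≠] 0) (𝓝 (P - Q)) := fun i => by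
    rw [← hS0 i, ← hR0]
    exact ((hS i).sub hR).continuousAt.tendsto.mono_left nhdsWithin_le_nhds
  obtain ⟨μ, hμ, hsum⟩ :=
    exists_tendsto_one_sum_det2_div_eq_zero ⟨1, by omega⟩ _ (sub_ne_zero.mpr hPQ) hx
  refine (tendsto_norm_sum_div_sum_norm_of_sum_div_eq_zero
    (fun i s => triArea (S i s) (S (i + ⟨1, by omega⟩) s) (R s)) μ hμ ?_).congr fun s => ?_
  · filter_upwards [hsum] with s hs
    simp_rw [triArea_eq_det2, div_right_comm _ (2 : ℂ), ← sum_div, hs, zero_div]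
  · rw [sum_triArea_base_eq_sum_triArea_hub]
end

section
/- Illustration of the polynomial A − B + C (realization direction): for every triple (a, b, c) ∈ ℂ³ with a − b + c = 0, there exist points p, q, r, s, v ∈ ℂ × ℂ with p + r = q + s and area(s,p,v) = 0 such that area(p,q,v) = a, area(q,r,v) = b, and area(r,s,v) = c. -/
/-- **Illustration of `A − B + C` (realization direction).** Every zero `(a, b, c)` of
`A − B + C` is realized by a drawing of `T₁` with boundary a parallelogram in which the
triangle `spv` is degenerate. -/
theorem illustrate_A_sub_B_add_C (a b c : ℂ) (h : a - b + c = 0) :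
    ∃ p q r s v : ℂ × ℂ, p + r = q + s ∧ triArea s p v = 0 ∧
      triArea p q v = a ∧ triArea q r v = b ∧ triArea r s v = c := by
  -- `pqrs` is the parallelogram spanned by `(0, 2)` and `(-b, 0)`, and `v` lies on the line `sp`
  -- where `pqv` has area `a`; then `qrv` has area `b` and `rsv` has area `b - a = c`.
  refine ⟨(0, 0), (0, 2), (-b, 2), (-b, 0), (-a, 0), ?_, ?_, ?_, ?_, ?_⟩
  · simp
  · simp [triArea]
  · simp only [triArea]; ring
  · simp only [triArea]; ring
  · simp only [triArea]; linear_combination -h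
end

section
/- Dissection theorem for two triangles (instance of Main Theorem 2 with the computed second volume of the area encyclopedia): given a dissection of the unit square into 2 triangles, both triangles have area 1/2. -/
/-!
A triangle with vertices `a, b, c` is the image of the standard triangle under
`p ↦ a + p.1 • (b - a) + p.2 • (c - a)`, so its area is `|det(b - a, c - a)| / 2`; for vertices in
the unit square the determinant is at most `1` in absolute value, so each piece of the dissection
has area at most `1/2`. Convex sets have null frontier, so pieces with disjoint interiors are
a.e. disjoint and their areas add up to the area `1` of the square, forcing equality.
-/

open MeasureTheory
open scoped Pointwise

theorem MeasureTheory.Measure.addHaar_iUnion_of_convex {E ι : Type*} [NormedAddCommGroup E]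
    [NormedSpace ℝ E] [MeasurableSpace E] [BorelSpace E] [FiniteDimensional ℝ E]
    (μ : Measure E) [μ.IsAddHaarMeasure] [Fintype ι] {T : ι → Set E}
    (hconv : ∀ i, Convex ℝ (T i))
    (hdisj : Pairwise fun i j ↦ Disjoint (interior (T i)) (interior (T j))) :
    μ (⋃ i, T i) = ∑ i, μ (T i) := by
  have hae : ∀ i, interior (T i) =ᵐ[μ] T i :=
    fun i ↦ interior_ae_eq_of_null_frontier ((hconv i).addHaar_frontier μ)
  rw [measure_iUnion₀ (fun i j hij ↦ (hdisj hij).aedisjoint.congr (hae i).symm (hae j).symm)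
    (fun i ↦ (hconv i).nullMeasurableSet μ), tsum_fintype]

theorem convexHull_stdTriangle :
    convexHull ℝ {((0 : ℝ), (0 : ℝ)), (1, 0), (0, 1)} =
      {p : ℝ × ℝ | 0 ≤ p.1 ∧ 0 ≤ p.2 ∧ p.1 + p.2 ≤ 1} := by
  apply subset_antisymm
  · refine convexHull_min ?_ ?_
    · rintro p (rfl | rfl | rfl) <;> norm_num
    · rintro p ⟨hp1, hp2, hp3⟩ q ⟨hq1, hq2, hq3⟩ s t hs ht hst
      simp only [Set.mem_ofPred_eq, Prod.fst_add, Prod.snd_add, Prod.smul_fst, Prod.smul_snd,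
        smul_eq_mul]
      exact ⟨by positivity, by positivity, by nlinarith⟩
  · rintro ⟨x, y⟩ ⟨hx, hy, hxy⟩
    have hvert : ∀ v ∈ ({((0 : ℝ), (0 : ℝ)), (1, 0), (0, 1)} : Set (ℝ × ℝ)),
        v ∈ convexHull ℝ {((0 : ℝ), (0 : ℝ)), (1, 0), (0, 1)} :=
      fun v ↦ (subset_convexHull ℝ _ ·)
    have hcomb := (convex_convexHull ℝ {((0 : ℝ), (0 : ℝ)), (1, 0), (0, 1)}).sum_mem
      (t := Finset.univ) (w := ![1 - x - y, x, y]) (z := ![(0, 0), (1, 0), (0, 1)])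
      (by simp [Fin.forall_fin_succ]; grind) (by simp [Fin.sum_univ_three]; ring)
      (by simp [Fin.forall_fin_succ, hvert])
    simpa [Fin.sum_univ_three] using hcomb

theorem volume_stdTriangle :
    volume {p : ℝ × ℝ | 0 ≤ p.1 ∧ 0 ≤ p.2 ∧ p.1 + p.2 ≤ 1} = ENNReal.ofReal (1 / 2) := by
  set S := {p : ℝ × ℝ | p.1 ∈ Set.Icc 0 1 ∧ p.2 ∈ Set.Icc 0 (1 - p.1)}
  have hS : {p : ℝ × ℝ | 0 ≤ p.1 ∧ 0 ≤ p.2 ∧ p.1 + p.2 ≤ 1} = S := by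
    ext ⟨x, y⟩
    exact ⟨fun ⟨h1, h2, h3⟩ ↦ ⟨⟨h1, by linarith⟩, h2, by linarith⟩,
      fun ⟨⟨h1, _⟩, h2, h3⟩ ↦ ⟨h1, h2, by linarith⟩⟩
  have hmeas : MeasurableSet S := measurableSet_region_between_cc measurable_const
    (measurable_const.sub measurable_id) measurableSet_Icc
  have hsection : ∀ x, volume (Prod.mk x ⁻¹' S) =
      (Set.Icc 0 1).indicator (fun x ↦ ENNReal.ofReal (1 - x)) x := by
    intro x
    by_cases hx : x ∈ Set.Icc (0 : ℝ) 1
    · rw [Set.indicator_of_mem hx, ← sub_zero (1 - x), ← Real.volume_Icc]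
      exact congrArg volume (Set.ext fun _ ↦ and_iff_right hx)
    · rw [Set.indicator_of_notMem hx,
        Set.eq_empty_of_forall_notMem (s := Prod.mk x ⁻¹' S) fun _ h ↦ hx h.1, measure_empty]
  have hint : ∫ x in Set.Icc (0 : ℝ) 1, (1 - x) = 1 / 2 := by
    rw [integral_Icc_eq_integral_Ioc, ← intervalIntegral.integral_of_le zero_le_one,
      intervalIntegral.integral_sub intervalIntegrable_const intervalIntegral.intervalIntegrable_id]
    norm_num [integral_id]
  rw [hS, Measure.volume_eq_prod, Measure.prod_apply hmeas]
  simp_rw [hsection]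
  rw [lintegral_indicator measurableSet_Icc, ← hint, ofReal_integral_eq_lintegral_ofReal]
  · exact (continuous_const.sub continuous_id).integrableOn_Icc
  · filter_upwards [self_mem_ae_restrict measurableSet_Icc] with x hx
    exact sub_nonneg.2 hx.2

theorem volume_convexHull_triangle (a b c : ℝ × ℝ) :
    volume (convexHull ℝ {a, b, c}) =
      ENNReal.ofReal (|(b.1 - a.1) * (c.2 - a.2) - (b.2 - a.2) * (c.1 - a.1)| / 2) := by
  set L := Matrix.toLin (Module.Basis.finTwoProd ℝ) (Module.Basis.finTwoProd ℝ)
      !![b.1 - a.1, c.1 - a.1; b.2 - a.2, c.2 - a.2]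
  have hvert : {a, b, c} = a +ᵥ L '' {((0 : ℝ), (0 : ℝ)), (1, 0), (0, 1)} := by
    simp [L, Set.image_insert_eq, Set.vadd_set_insert, ← Prod.fst_sub, ← Prod.snd_sub,
      Prod.mk_zero_zero]
  rw [hvert, convexHull_vadd, measure_vadd, ← L.image_convexHull, Measure.addHaar_image_linearMap,
    convexHull_stdTriangle, volume_stdTriangle, LinearMap.det_toLin, Matrix.det_fin_two_of,
    ← ENNReal.ofReal_mul (abs_nonneg _)]
  ring_nf

section UnitSquare

variable {a b c : ℝ × ℝ}

theorem det_le_one_of_mem_unitSquare (ha : a ∈ Set.Icc (0, 0) (1, 1))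
    (hb : b ∈ Set.Icc (0, 0) (1, 1)) (hc : c ∈ Set.Icc (0, 0) (1, 1)) :
    (b.1 - a.1) * (c.2 - a.2) - (b.2 - a.2) * (c.1 - a.1) ≤ 1 := by
  obtain ⟨⟨ha1, ha2⟩, ha1', ha2'⟩ := ha
  obtain ⟨⟨hb1, hb2⟩, hb1', hb2'⟩ := hb
  obtain ⟨⟨hc1, hc2⟩, hc1', hc2'⟩ := hc
  -- The determinant is `∑ x_i (y_{i+1} - y_{i+2})` cyclically; the differences sum to zero and
  -- their positive part is at most `max y - min y ≤ 1`.
  rcases le_total 0 (b.2 - c.2) with h₁ | h₁ <;> rcases le_total 0 (c.2 - a.2) with h₂ | h₂ <;>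
    rcases le_total 0 (a.2 - b.2) with h₃ | h₃ <;> nlinarith

theorem volume_convexHull_le_half_of_subset_unitSquare
    (h : {a, b, c} ⊆ Set.Icc ((0, 0) : ℝ × ℝ) (1, 1)) :
    volume (convexHull ℝ {a, b, c}) ≤ ENNReal.ofReal (1 / 2) := by
  have ha : a ∈ Set.Icc ((0, 0) : ℝ × ℝ) (1, 1) := h (by simp)
  have hb : b ∈ Set.Icc ((0, 0) : ℝ × ℝ) (1, 1) := h (by simp)
  have hc : c ∈ Set.Icc ((0, 0) : ℝ × ℝ) (1, 1) := h (by simp)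
  have hdet : |(b.1 - a.1) * (c.2 - a.2) - (b.2 - a.2) * (c.1 - a.1)| ≤ 1 :=
    abs_le.2 ⟨by linarith [det_le_one_of_mem_unitSquare ha hc hb],
      det_le_one_of_mem_unitSquare ha hb hc⟩
  rw [volume_convexHull_triangle]
  exact ENNReal.ofReal_le_ofReal (by linarith)

theorem volume_unitSquare : volume (Set.Icc ((0, 0) : ℝ × ℝ) (1, 1)) = 1 := by
  rw [← Set.Icc_prod_Icc, Measure.volume_eq_prod, Measure.prod_prod]
  simp

end UnitSquare

theorem dissection_two_triangles_general (a b c : Fin 2 → ℝ × ℝ)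
    (T : Fin 2 → Set (ℝ × ℝ))
    (hT : ∀ i, T i = convexHull ℝ {a i, b i, c i})
    (hdisj : ∀ i j, i ≠ j → Disjoint (interior (T i)) (interior (T j)))
    (hcover : (⋃ i, T i) = Set.Icc ((0, 0) : ℝ × ℝ) (1, 1)) :
    ∀ i, (volume (T i)).toReal = 1 / 2 := by
  have hle : ∀ i, volume (T i) ≤ ENNReal.ofReal (1 / 2) := fun i ↦ by
    rw [hT i]
    exact volume_convexHull_le_half_of_subset_unitSquare
      ((subset_convexHull ℝ _).trans (hT i ▸ hcover ▸ Set.subset_iUnion T i))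
  have hsum : volume (T 0) + volume (T 1) = 1 := by
    simpa [Fin.sum_univ_two, hcover, volume_unitSquare] using
      (Measure.addHaar_iUnion_of_convex volume (fun i ↦ hT i ▸ convex_convexHull ℝ _) hdisj).symm
  have hfin : ∀ i, volume (T i) ≠ ⊤ := fun i ↦ ne_top_of_le_ne_top ENNReal.ofReal_ne_top (hle i)
  have hreal := congrArg ENNReal.toReal hsum
  rw [ENNReal.toReal_add (hfin 0) (hfin 1), ENNReal.toReal_one] at hreal
  have hle_real := fun i ↦ ENNReal.toReal_le_of_le_ofReal (by norm_num) (hle i)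
  exact Fin.forall_fin_two.2
    ⟨by linarith [hle_real 0, hle_real 1], by linarith [hle_real 0, hle_real 1]⟩

/-- **Dissection theorem for two triangles.** If the unit square is dissected into two
triangles, then both triangles have area `1/2`. -/
theorem dissection_two_triangles (a b c : Fin 2 → ℝ × ℝ)
    (hind : ∀ i, AffineIndependent ℝ ![a i, b i, c i])
    (T : Fin 2 → Set (ℝ × ℝ))
    (hT : ∀ i, T i = convexHull ℝ {a i, b i, c i})
    (hdisj : ∀ i j, i ≠ j → Disjoint (interior (T i)) (interior (T j)))
    (hcover : (⋃ i, T i) = Set.Icc ((0, 0) : ℝ × ℝ) (1, 1)) :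
    ∀ i, (volume (T i)).toReal = 1 / 2 :=
  dissection_two_triangles_general a b c T hT hdisj hcover
end

section
/- The area polynomial of the triangulation T₂, namely A² − 2AC + 2AE + C² + 2CE + E² − B² − 2BD − 2BF − D² + 2DF − F², is irreducible as an element of the polynomial ring ℚ[A, B, C, D, E, F] in six variables over the rationals. -/
/-!
Writing the polynomial as `(A - C + E)² - (B + D + F)² + 4CE + 4DF`, the substitution
`C ↦ C + A` turns it into `4E · A + ((C + E)² - (B + D + F)² + 4DF)`, which has degree one
in `A`. Over the domain `ℚ[B, C, D, E, F]` such a polynomial is irreducible as soon as its two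
coefficients are relatively prime, and here `4E` is prime and does not divide the constant
coefficient, which equals `1` at `C = 1`, `B = D = E = F = 0`.
-/

open MvPolynomial

namespace MvPolynomial

section Transvection

variable {R σ : Type*} [CommRing R] [DecidableEq σ]

noncomputable def transvection (i j : σ) (c : R) : MvPolynomial σ R →ₐ[R] MvPolynomial σ R :=
  aeval (Function.update X i (X i + C c * X j))

theorem transvection_comp_transvection_neg {i j : σ} (hij : i ≠ j) (c : R) :
    (transvection i j c).comp (transvection i j (-c)) = AlgHom.id R _ := by
  refine algHom_ext fun k => ?_
  rcases eq_or_ne k i with rfl | hk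
  · simp [transvection, hij.symm]
  · simp [transvection, hk]

noncomputable def transvectionEquiv {i j : σ} (hij : i ≠ j) (c : R) :
    MvPolynomial σ R ≃ₐ[R] MvPolynomial σ R :=
  AlgEquiv.ofAlgHom (transvection i j c) (transvection i j (-c))
    (transvection_comp_transvection_neg hij c)
    (by simpa using transvection_comp_transvection_neg hij (-c))

theorem transvectionEquiv_apply {i j : σ} (hij : i ≠ j) (c : R) (p : MvPolynomial σ R) :
    transvectionEquiv hij c p = transvection i j c p :=
  rfl

end Transvection

section FinSucc

variable {R : Type*} [CommRing R] {n : ℕ}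

theorem finSuccEquiv_rename_succ (p : MvPolynomial (Fin n) R) :
    finSuccEquiv R n (rename Fin.succ p) = Polynomial.C p := by
  induction p using MvPolynomial.induction_on with
  | C a => simp [finSuccEquiv_apply]
  | add p q hp hq => simp [hp, hq]
  | mul_X p i hp => simp [hp, finSuccEquiv_X_succ]

theorem irreducible_X_zero_mul_rename_succ_add [IsDomain R] {a b : MvPolynomial (Fin n) R}
    (ha : a ≠ 0) (hab : IsRelPrime a b) :
    Irreducible (X 0 * rename Fin.succ a + rename Fin.succ b) := by
  rw [← MulEquiv.irreducible_iff (finSuccEquiv R n), map_add, map_mul, finSuccEquiv_X_zero,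
    finSuccEquiv_rename_succ, finSuccEquiv_rename_succ, mul_comm]
  exact Polynomial.irreducible_C_mul_X_add_C ha hab

end FinSucc

end MvPolynomial

/-- The area polynomial of the triangulation `T₂`, namely
`A² − 2AC + 2AE + C² + 2CE + E² − B² − 2BD − 2BF − D² + 2DF − F²` (with variables
`A, B, C, D, E, F` as `X 0, …, X 5`), is irreducible in `ℚ[A, B, C, D, E, F]`. -/
theorem area_polynomial_T2_irreducible :
    Irreducible
      ((X 0) ^ 2 - 2 * X 0 * X 2 + 2 * X 0 * X 4 + (X 2) ^ 2 + 2 * X 2 * X 4 + (X 4) ^ 2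
          - (X 1) ^ 2 - 2 * X 1 * X 3 - 2 * X 1 * X 5 - (X 3) ^ 2 + 2 * X 3 * X 5 - (X 5) ^ 2 :
        MvPolynomial (Fin 6) ℚ) := by
  set b : MvPolynomial (Fin 5) ℚ := (X 1 + X 3) ^ 2 - (X 0 + X 2 + X 4) ^ 2 + 4 * X 2 * X 4
  have four_isUnit : IsUnit (4 : MvPolynomial (Fin 5) ℚ) := by
    rw [← map_ofNat C 4]
    exact (IsUnit.mk0 (4 : ℚ) four_ne_zero).map C
  have four_X_irreducible : Irreducible (4 * X 3 : MvPolynomial (Fin 5) ℚ) :=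
    (irreducible_isUnit_mul four_isUnit).mpr X_prime.irreducible
  have not_dvd : ¬ (4 * X 3 : MvPolynomial (Fin 5) ℚ) ∣ b := fun h => by
    simpa [b] using map_dvd (eval ![0, 1, 0, 0, 0]) ((dvd_mul_left _ _).trans h)
  rw [← MulEquiv.irreducible_iff (transvectionEquiv (by decide : (2 : Fin 6) ≠ 0) (1 : ℚ))]
  convert irreducible_X_zero_mul_rename_succ_add four_X_irreducible.ne_zero
    (four_X_irreducible.isRelPrime_iff_not_dvd.mpr not_dvd) using 1
  simp [transvectionEquiv_apply, transvection, b, map_ofNat]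
  ring
end

section
/- The quartic polynomial A⁴ + 4A³B − 4A³C + 4A³D + 6A²B² − 4A²BC + 4A²BD + 6A²C² − 4A²CD + 6A²D² + 4AB³ + 4AB²C − 4AB²D − 4ABC² − 40ABCD − 4ABD² − 4AC³ − 4AC²D + 4ACD² + 4AD³ + B⁴ + 4B³C − 4B³D + 6B²C² − 4B²CD + 6B²D² + 4BC³ + 4BC²D − 4BCD² − 4BD³ + C⁴ + 4C³D + 6C²D² + 4CD³ + D⁴ (the quartic entry of the fourth volume of the area encyclopedia) is irreducible as an element of the polynomial ring ℚ[A, B, C, D] in four variables over the rationals. -/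
/-!
Restricting the quartic to the line `(A, B, C, D) = (t, 1, 3, 2)` gives
`t⁴ + 56 t² - 384 t + 784`, whose degree `4` is still the total degree. Restriction to a line
does not raise total degrees, so a nontrivial factorization of the quartic would restrict to one
into factors of positive degree. Over `ℚ` the restricted quartic is positive, so it has no linear
factor, and a factorization `(t² + a t + b) (t² - a t + d)` would make `a²` a root of the
resolvent cubic `(u + 96) (u + 48) (u - 32)`, impossible since `32` is not a rational square.
-/

namespace Polynomial

noncomputable def depressedQuartic {R : Type*} [Semiring R] (p q r : R) : R[X] :=
  X ^ 4 + C p * X ^ 2 + C q * X + C r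

section CommSemiring

variable {R : Type*} [CommSemiring R] (p q r : R)

theorem eval_depressedQuartic (x : R) :
    (depressedQuartic p q r).eval x = x ^ 4 + p * x ^ 2 + q * x + r := by
  simp [depressedQuartic]

theorem natDegree_depressedQuartic [Nontrivial R] : (depressedQuartic p q r).natDegree = 4 := by
  unfold depressedQuartic
  compute_degree!

theorem monic_depressedQuartic [Nontrivial R] : (depressedQuartic p q r).Monic := by
  unfold depressedQuartic
  monicity!

end CommSemiring

/-- Comparing coefficients gives `c = -a`, `b + d = p + a²`, `a (d - b) = q`, `b d = r`, and
`a² ((b + d)² - 4 b d) = (a (d - b))²`. -/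
theorem resolvent_eq_zero_of_depressedQuartic_eq_mul {R : Type*} [CommRing R] {p q r a b c d : R}
    (h : depressedQuartic p q r = (X ^ 2 + C a * X + C b) * (X ^ 2 + C c * X + C d)) :
    a ^ 2 * ((p + a ^ 2) ^ 2 - 4 * r) = q ^ 2 := by
  have hexp : (X ^ 2 + C a * X + C b) * (X ^ 2 + C c * X + C d) = X ^ 4 + C (a + c) * X ^ 3
      + C (b + d + a * c) * X ^ 2 + C (a * d + b * c) * X + C (b * d) := by
    simp only [map_add, map_mul]
    ring
  rw [hexp, depressedQuartic] at h
  have hc := congrArg (coeff · 3) h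
  have hp := congrArg (coeff · 2) h
  have hq := congrArg (coeff · 1) h
  have hr := congrArg (coeff · 0) h
  simp only [coeff_add, coeff_C_mul_X_pow, coeff_C_mul_X, coeff_X_pow, coeff_C] at hc hp hq hr
  norm_num at hc hp hq hr
  obtain rfl : c = -a := by linear_combination -hc
  subst hp hq hr
  ring

theorem Monic.eq_X_sq_add_C_mul_X_add_C {R : Type*} [CommSemiring R] {f : R[X]} (hf : f.Monic)
    (h : f.natDegree = 2) : f = X ^ 2 + C (f.coeff 1) * X + C (f.coeff 0) := by
  conv_lhs => rw [hf.as_sum, h]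
  simp [Finset.sum_range_succ]
  ring

theorem irreducible_depressedQuartic {K : Type*} [Field K] {p q r : K}
    (hroot : ∀ x : K, x ^ 4 + p * x ^ 2 + q * x + r ≠ 0)
    (hres : ∀ a : K, a ^ 2 * ((p + a ^ 2) ^ 2 - 4 * r) ≠ q ^ 2) :
    Irreducible (depressedQuartic p q r) := by
  have hdeg := natDegree_depressedQuartic p q r
  rw [(monic_depressedQuartic p q r).irreducible_iff_natDegree', hdeg]
  refine ⟨fun h => by simp [h] at hdeg, fun f g hf hg hfg hg12 => ?_⟩
  have hfg_deg : f.natDegree + g.natDegree = 4 := by rw [← hf.natDegree_mul hg, hfg, hdeg]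
  rcases (by simp at hg12; omega : g.natDegree = 1 ∨ g.natDegree = 2) with hg1 | hg2
  · apply hroot (-g.coeff 0)
    rw [← eval_depressedQuartic, ← hfg, hg.eq_X_add_C hg1]
    simp
  · rw [hf.eq_X_sq_add_C_mul_X_add_C (by omega), hg.eq_X_sq_add_C_mul_X_add_C hg2] at hfg
    exact hres _ (resolvent_eq_zero_of_depressedQuartic_eq_mul hfg.symm)

end Polynomial

namespace MvPolynomial

open Polynomial in
theorem natDegree_aeval_le_totalDegree_mul {σ R : Type*} [CommSemiring R]
    {g : σ → R[X]} {d : ℕ} (hg : ∀ i, (g i).natDegree ≤ d) (p : MvPolynomial σ R) :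
    (aeval g p).natDegree ≤ p.totalDegree * d := by
  conv_lhs => rw [p.as_sum, map_sum]
  refine natDegree_sum_le_of_forall_le _ _ fun m hm => ?_
  rw [aeval_monomial, Polynomial.algebraMap_eq]
  calc (Polynomial.C (coeff m p) * m.prod fun i k => g i ^ k).natDegree
      ≤ ∑ i ∈ m.support, (g i ^ m i).natDegree :=
        (natDegree_C_mul_le _ _).trans (natDegree_prod_le _ _)
    _ ≤ ∑ i ∈ m.support, m i * d :=
        Finset.sum_le_sum fun i _ => natDegree_pow_le.trans (Nat.mul_le_mul_left _ (hg i))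
    _ = (m.sum fun _ e => e) * d := (Finset.sum_mul ..).symm
    _ ≤ p.totalDegree * d := Nat.mul_le_mul_right _ (le_totalDegree hm)

theorem isUnit_of_totalDegree_eq_zero {σ K : Type*} [Field K] {p : MvPolynomial σ K}
    (hp : p ≠ 0) (h : p.totalDegree = 0) : IsUnit p := by
  rw [totalDegree_eq_zero_iff_eq_C.mp h] at hp ⊢
  exact (isUnit_iff_ne_zero.mpr fun h0 => hp (by rw [h0, C_0])).map C

open Polynomial in
theorem irreducible_of_irreducible_aeval {σ K : Type*} [Field K]
    {g : σ → K[X]} (hg : ∀ i, (g i).natDegree ≤ 1) {p : MvPolynomial σ K} {f : K[X]}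
    (hpf : aeval g p = f) (hdeg : p.totalDegree ≤ f.natDegree) (hf : Irreducible f) :
    Irreducible p := by
  subst hpf
  refine ⟨fun hu => hf.not_isUnit (hu.map _), fun a b hab => ?_⟩
  subst hab
  have hle (c : MvPolynomial σ K) : (aeval g c).natDegree ≤ c.totalDegree := by
    simpa using natDegree_aeval_le_totalDegree_mul hg c
  have ha : a ≠ 0 := by rintro rfl; simp at hf
  have hb : b ≠ 0 := by rintro rfl; simp at hf
  rw [map_mul] at hf hdeg
  rw [totalDegree_mul_of_isDomain ha hb] at hdeg
  have hsum := hdeg.trans natDegree_mul_le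
  have hlea := hle a
  have hleb := hle b
  refine (hf.isUnit_or_isUnit rfl).imp (fun h => ?_) (fun h => ?_)
  · have ha0 := natDegree_eq_zero_of_isUnit h
    exact isUnit_of_totalDegree_eq_zero ha (by omega)
  · have hb0 := natDegree_eq_zero_of_isUnit h
    exact isUnit_of_totalDegree_eq_zero hb (by omega)

theorem IsHomogeneous.mul_of_add_eq {σ R : Type*} [CommSemiring R]
    {φ ψ : MvPolynomial σ R} {m n k : ℕ} (hφ : φ.IsHomogeneous m) (hψ : ψ.IsHomogeneous n)
    (h : m + n = k) : (φ * ψ).IsHomogeneous k :=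
  h ▸ hφ.mul hψ

end MvPolynomial

open MvPolynomial

set_option maxHeartbeats 1000000

theorem irreducible_depressedQuartic_56_neg384_784 :
    Irreducible (Polynomial.depressedQuartic (56 : ℚ) (-384) 784) := by
  refine Polynomial.irreducible_depressedQuartic (fun x hx => ?_) (fun a ha => ?_)
  · nlinarith [sq_nonneg (x ^ 2 - 4), sq_nonneg (x - 3)]
  · have hcubic : (a ^ 2 + 96) * (a ^ 2 + 48) * (a ^ 2 - 32) = 0 := by linear_combination ha
    have h32 : a ^ 2 = 32 := by
      rcases mul_eq_zero.mp hcubic with h | h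
      · rcases mul_eq_zero.mp h with h | h <;> nlinarith [sq_nonneg a]
      · linarith
    exact (by norm_num : ¬IsSquare (32 : ℚ)) ⟨a, by rw [← h32, sq]⟩

/-- The quartic entry of the fourth volume of the area encyclopedia (with variables
`A, B, C, D` as `X 0, X 1, X 2, X 3`) is irreducible in `ℚ[A, B, C, D]`. -/
theorem encyc4_quartic_irreducible :
    Irreducible
      ((X 0) ^ 4 + 4 * (X 0) ^ 3 * X 1 - 4 * (X 0) ^ 3 * X 2 + 4 * (X 0) ^ 3 * X 3
        + 6 * (X 0) ^ 2 * (X 1) ^ 2 - 4 * (X 0) ^ 2 * X 1 * X 2 + 4 * (X 0) ^ 2 * X 1 * X 3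
        + 6 * (X 0) ^ 2 * (X 2) ^ 2 - 4 * (X 0) ^ 2 * X 2 * X 3 + 6 * (X 0) ^ 2 * (X 3) ^ 2
        + 4 * X 0 * (X 1) ^ 3 + 4 * X 0 * (X 1) ^ 2 * X 2 - 4 * X 0 * (X 1) ^ 2 * X 3
        - 4 * X 0 * X 1 * (X 2) ^ 2 - 40 * X 0 * X 1 * X 2 * X 3 - 4 * X 0 * X 1 * (X 3) ^ 2
        - 4 * X 0 * (X 2) ^ 3 - 4 * X 0 * (X 2) ^ 2 * X 3 + 4 * X 0 * X 2 * (X 3) ^ 2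
        + 4 * X 0 * (X 3) ^ 3 + (X 1) ^ 4 + 4 * (X 1) ^ 3 * X 2 - 4 * (X 1) ^ 3 * X 3
        + 6 * (X 1) ^ 2 * (X 2) ^ 2 - 4 * (X 1) ^ 2 * X 2 * X 3 + 6 * (X 1) ^ 2 * (X 3) ^ 2
        + 4 * X 1 * (X 2) ^ 3 + 4 * X 1 * (X 2) ^ 2 * X 3 - 4 * X 1 * X 2 * (X 3) ^ 2
        - 4 * X 1 * (X 3) ^ 3 + (X 2) ^ 4 + 4 * (X 2) ^ 3 * X 3 + 6 * (X 2) ^ 2 * (X 3) ^ 2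
        + 4 * X 2 * (X 3) ^ 3 + (X 3) ^ 4 :
        MvPolynomial (Fin 4) ℚ) := by
  refine irreducible_of_irreducible_aeval (g := ![Polynomial.X, 1, 3, 2])
    (fun i => by fin_cases i <;> simp) ?_ ?_ irreducible_depressedQuartic_56_neg384_784
  · simp [Polynomial.depressedQuartic, map_ofNat]
    ring
  · rw [Polynomial.natDegree_depressedQuartic]
    refine IsHomogeneous.totalDegree_le ?_
    -- each degree side condition `m + n = k` is closed by `rfl` once its factors are done
    repeat' first
      | apply IsHomogeneous.add | apply IsHomogeneous.sub
      | apply isHomogeneous_X_pow | apply isHomogeneous_X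
      | apply IsHomogeneous.mul_of_add_eq
      | exact (isHomogeneous_C _ (_ : ℚ) : IsHomogeneous (C _) 0)
      | rfl
end
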